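/- There exist a constant ε₀ > 0 and a function δ : (0, ε₀) → (0, 1) such that for every ε ∈ (0, ε₀), every field K, every n ∈ ℕ, and every function φ : {0,1,…,n} → K, the 2^n × 2^n matrix M over K, with rows and columns indexed by {0,1}^n and defined by M(x,y) = φ(⟨x,y⟩) (i.e., the truth table matrix of the function IP_f(x,y) = f(x₁∧y₁,…,xₙ∧yₙ) for the symmetric function f(z) = φ(|z|)), admits a 2^n × 2^n matrix B over K with rank(B) ≤ 2^{δ(ε)·n} differing from M in at most 2^{(1+ε)n} entries. -/

import Mathlib

open scoped Classical
open Finset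

noncomputable section

def ip {n : ℕ} (x y : Fin n → Bool) : ℕ :=
  (Finset.univ.filter (fun i => x i ∧ y i)).card

def wt {n : ℕ} (x : Fin n → Bool) : ℕ :=
  (Finset.univ.filter (fun i => x i)).card

def Had (K : Type) [Field K] (n : ℕ) : Matrix (Fin n → Bool) (Fin n → Bool) K :=
  Matrix.of fun x y => (-1 : K) ^ ip x y

def diffCount {n : ℕ} {K : Type} [Field K]
    (A B : Matrix (Fin n → Bool) (Fin n → Bool) K) : ℕ :=
  Nat.card {p : (Fin n → Bool) × (Fin n → Bool) // A p.1 p.2 ≠ B p.1 p.2}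

def ProbRankLE {n : ℕ} {K : Type} [Field K]
    (A : Matrix (Fin n → Bool) (Fin n → Bool) K) (ε r : ℝ) : Prop :=
  ∃ (s : Finset (Matrix (Fin n → Bool) (Fin n → Bool) K))
    (w : Matrix (Fin n → Bool) (Fin n → Bool) K → ℝ),
    (∀ M ∈ s, 0 ≤ w M) ∧ (∑ M ∈ s, w M) = 1 ∧
    (∀ M ∈ s, ((M.rank : ℝ)) ≤ r) ∧
    ∀ x y : Fin n → Bool, 1 - ε ≤ ∑ M ∈ s, (if M x y = A x y then w M else 0)

/-!
Split the rows and columns by Hamming weight. On the block `wt x = a`, `wt y = b` one has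
`ip x y = L + k` with `L = a + b - n` (truncated) and `k = min (ip x y) (ip xᶜ yᶜ)`, and
`2 k ≤ n - hammingDist x y`. By Newton's forward-difference formula `φ (L + k)` is the sum
`∑ j ≤ d, C(k, j) Δʲφ(L)` as soon as `k ≤ d`, and `(x, y) ↦ C(k, j)` has rank at most `C(n, j)`.
With `d ≈ (1/2 - β/4) n` this gives a matrix of rank `(n + 1)² ∑ j ≤ d, C(n, j) ≤ 2^(δ n)`,
`δ < 1`, agreeing with `M` except on pairs at Hamming distance at most `n - 2 d ≤ β n`; there
are at most `2ⁿ · exp (n H(β)) ≤ 2^((1 + ε) n)` of those. For small `n` it suffices to delete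
one row of `M`.
-/

open Filter Topology Real

namespace Matrix

variable {K : Type} [Field K] {m n : Type} [Fintype n]

theorem rank_add_le (A B : Matrix m n K) : (A + B).rank ≤ A.rank + B.rank := by
  rw [rank, rank, rank, mulVecLin_add]
  refine (Submodule.finrank_mono ?_).trans (Submodule.finrank_add_le_finrank_add_finrank _ _)
  rintro _ ⟨v, rfl⟩
  exact Submodule.add_mem_sup (LinearMap.mem_range_self _ v) (LinearMap.mem_range_self _ v)

theorem rank_sum_le {α : Type} (s : Finset α) (A : α → Matrix m n K) :
    (∑ i ∈ s, A i).rank ≤ ∑ i ∈ s, (A i).rank := by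
  induction s using Finset.induction_on with
  | empty => simp
  | insert a s ha ih =>
    rw [Finset.sum_insert ha, Finset.sum_insert ha]
    exact (rank_add_le _ _).trans (Nat.add_le_add_left ih _)

theorem rank_smul_le [Fintype m] (c : K) (A : Matrix m n K) :
    (c • A).rank ≤ A.rank := by
  rw [smul_eq_diagonal_mul]
  exact rank_mul_le_right _ _

theorem rank_of_blocks_le [Fintype m] {α β : Type}
    (κ : m → α) (μ : n → β) (s : Finset α) (t : Finset β) (hκ : ∀ x, κ x ∈ s)
    (hμ : ∀ y, μ y ∈ t) (F : α → β → Matrix m n K) :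
    (of fun x y => F (κ x) (μ y) x y).rank ≤ ∑ a ∈ s, ∑ b ∈ t, (F a b).rank := by
  have hblocks : (of fun x y => F (κ x) (μ y) x y) = ∑ a ∈ s, ∑ b ∈ t,
      diagonal (fun x => if κ x = a then (1 : K) else 0) * F a b *
        diagonal (fun y => if μ y = b then (1 : K) else 0) := by
    ext x y
    simp [sum_apply, diagonal_mul, mul_diagonal, hκ, hμ]
  rw [hblocks]
  refine (rank_sum_le _ _).trans (sum_le_sum fun a _ => (rank_sum_le _ _).trans ?_)
  exact sum_le_sum fun b _ => (rank_mul_le_left _ _).trans (rank_mul_le_right _ _)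

end Matrix

theorem diffCount_le_card {K : Type} [Field K] {n : ℕ}
    {A B : Matrix (Fin n → Bool) (Fin n → Bool) K} (s : Finset ((Fin n → Bool) × (Fin n → Bool)))
    (h : ∀ p ∉ s, A p.1 p.2 = B p.1 p.2) :
    diffCount A B ≤ #s := by
  rw [diffCount, Nat.card_eq_fintype_card, Fintype.card_subtype]
  exact card_le_card fun p hp => by_contra fun hps => (mem_filter.mp hp).2 (h p hps)

section Counting

variable {n : ℕ}

theorem choose_ip_eq_card (x y : Fin n → Bool) (j : ℕ) :
    (ip x y).choose j = #{S ∈ powersetCard j univ | ∀ i ∈ S, x i ∧ y i} := by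
  rw [ip, ← card_powersetCard]
  congr 1
  ext S
  simp [mem_powersetCard, subset_iff, and_comm]

theorem ip_add_ip_compl_add_hammingDist (x y : Fin n → Bool) :
    ip x y + ip xᶜ yᶜ + hammingDist x y = n := by
  simp only [ip, hammingDist, card_filter, ← sum_add_distrib]
  calc _ = ∑ _i : Fin n, 1 :=
        sum_congr rfl fun i _ => by cases hx : x i <;> cases hy : y i <;> simp [hx, hy]
    _ = n := by simp

theorem wt_add_wt (x y : Fin n → Bool) : wt x + wt y = 2 * ip x y + hammingDist x y := by
  simp only [ip, wt, hammingDist, card_filter, two_mul, ← sum_add_distrib]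
  exact sum_congr rfl fun i _ => by cases x i <;> cases y i <;> simp

theorem wt_le (x : Fin n → Bool) : wt x ≤ n :=
  (card_filter_le _ _).trans_eq (card_fin n)

theorem card_hammingDist_le (m : ℕ) :
    #{p : (Fin n → Bool) × (Fin n → Bool) | hammingDist p.1 p.2 ≤ m} ≤
      2 ^ n * ∑ t ∈ range (m + 1), n.choose t := by
  let diffSet (p : (Fin n → Bool) × (Fin n → Bool)) : (Fin n → Bool) × Finset (Fin n) :=
    (p.1, univ.filter fun i => p.1 i ≠ p.2 i)
  refine (card_le_card_of_injOn diffSet (t := univ ×ˢ (range (m + 1)).biUnion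
    fun t => powersetCard t univ) (fun p hp => ?_) ?_).trans ?_
  · simpa [diffSet, mem_powersetCard, Nat.lt_succ_iff, hammingDist] using hp
  · rintro ⟨x, y⟩ - ⟨x', y'⟩ - h
    simp only [diffSet, Prod.mk.injEq] at h
    obtain ⟨rfl, hS⟩ := h
    refine Prod.ext rfl (funext fun i => ?_)
    have := congrArg (i ∈ ·) hS
    simp only [mem_filter, mem_univ, true_and, eq_iff_iff] at this
    cases x i <;> cases hy : y i <;> cases hy' : y' i <;> simp_all
  rw [card_product, card_univ, Fintype.card_fun, Fintype.card_bool, Fintype.card_fin]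
  refine Nat.mul_le_mul_left _ (card_biUnion_le.trans_eq (sum_congr rfl fun t _ => ?_))
  simp

end Counting

theorem shift_eq_sum_range_fwdDiff_iter {G : Type} [AddCommGroup G] (f : ℕ → G) (L : ℕ)
    {k d : ℕ} (hk : k ≤ d) :
    f (L + k) = ∑ j ∈ range (d + 1), k.choose j • (fwdDiff 1)^[j] f L := by
  have := shift_eq_sum_fwdDiff_iter 1 f k L
  rw [smul_eq_mul, mul_one] at this
  rw [this]
  refine sum_subset (range_subset_range.mpr (by omega)) fun j _ hj => ?_
  rw [Nat.choose_eq_zero_of_lt (by simpa using hj), zero_smul]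

section Construction

variable {n : ℕ}

def orient (n s : ℕ) (x : Fin n → Bool) : Fin n → Bool := if n < s then xᶜ else x

theorem ip_eq_add_ip_orient (x y : Fin n → Bool) :
    ip x y = (wt x + wt y - n) + ip (orient n (wt x + wt y) x) (orient n (wt x + wt y) y) := by
  have := ip_add_ip_compl_add_hammingDist x y
  have := wt_add_wt x y
  unfold orient
  split_ifs <;> omega

theorem two_mul_ip_orient_add_hammingDist_le (x y : Fin n → Bool) :
    2 * ip (orient n (wt x + wt y) x) (orient n (wt x + wt y) y) + hammingDist x y ≤ n := by
  have := ip_add_ip_compl_add_hammingDist x y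
  have := wt_add_wt x y
  unfold orient
  split_ifs <;> omega

variable {K : Type} [Field K]

variable (K) in
theorem rank_choose_ip_le {ι κ : Type} [Fintype κ] (f : ι → Fin n → Bool) (g : κ → Fin n → Bool)
    (j : ℕ) : (Matrix.of fun x y => ((ip (f x) (g y)).choose j : K)).rank ≤ n.choose j := by
  let T := powersetCard j (univ : Finset (Fin n))
  let U : Matrix ι T K := .of fun x S => if ∀ i ∈ (S : Finset (Fin n)), f x i then 1 else 0
  let V : Matrix T κ K := .of fun S y => if ∀ i ∈ (S : Finset (Fin n)), g y i then 1 else 0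
  have hUV : (Matrix.of fun x y => ((ip (f x) (g y)).choose j : K)) = U * V := by
    ext x y
    simp only [Matrix.of_apply, choose_ip_eq_card, Matrix.mul_apply, U, V]
    rw [sum_coe_sort T fun S =>
      (if ∀ i ∈ S, f x i then (1 : K) else 0) * if ∀ i ∈ S, g y i then 1 else 0]
    simp [T, forall_and, ← ite_and, and_comm]
  rw [hUV]
  refine (Matrix.rank_mul_le_left _ _).trans ((Matrix.rank_le_card_width _).trans_eq ?_)
  simp [T]

-- Newton interpolation in the binomial basis, which unlike Lagrange interpolation works in every
-- characteristic.
def weightBlock (n d : ℕ) (φ : ℕ → K) (a b : ℕ) : Matrix (Fin n → Bool) (Fin n → Bool) K :=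
  ∑ j ∈ range (d + 1), (fwdDiff 1)^[j] φ (a + b - n) •
    .of fun x y => ((ip (orient n (a + b) x) (orient n (a + b) y)).choose j : K)

def symIpApprox (n d : ℕ) (φ : ℕ → K) : Matrix (Fin n → Bool) (Fin n → Bool) K :=
  .of fun x y => weightBlock n d φ (wt x) (wt y) x y

theorem rank_symIpApprox_le (d : ℕ) (φ : ℕ → K) :
    (symIpApprox n d φ).rank ≤ (n + 1) ^ 2 * ∑ j ∈ range (d + 1), n.choose j := by
  have hblock (a b : ℕ) : (weightBlock n d φ a b).rank ≤ ∑ j ∈ range (d + 1), n.choose j := by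
    rw [weightBlock]
    exact (Matrix.rank_sum_le _ _).trans <| sum_le_sum fun j _ =>
      (Matrix.rank_smul_le _ _).trans (rank_choose_ip_le K _ _ j)
  have hwt (x : Fin n → Bool) : wt x ∈ range (n + 1) := mem_range_succ_iff.mpr (wt_le x)
  refine (Matrix.rank_of_blocks_le wt wt _ _ hwt hwt _).trans ?_
  refine (sum_le_sum fun a _ => sum_le_sum fun b _ => hblock a b).trans_eq ?_
  simp only [sum_const, card_range, smul_eq_mul]
  ring

theorem symIpApprox_apply {d : ℕ} (φ : ℕ → K) {x y : Fin n → Bool}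
    (h : ip (orient n (wt x + wt y) x) (orient n (wt x + wt y) y) ≤ d) :
    symIpApprox n d φ x y = φ (ip x y) := by
  conv_rhs => rw [ip_eq_add_ip_orient x y, shift_eq_sum_range_fwdDiff_iter φ _ h]
  simp [symIpApprox, weightBlock, Matrix.sum_apply, nsmul_eq_mul, mul_comm]

theorem diffCount_symIpApprox_le {m d : ℕ} (φ : ℕ → K) (h : n ≤ 2 * d + m + 1) :
    diffCount (symIpApprox n d φ) (.of fun x y => φ (ip x y)) ≤
      2 ^ n * ∑ t ∈ range (m + 1), n.choose t := by
  refine (diffCount_le_card {p | hammingDist p.1 p.2 ≤ m} fun p hp => ?_).trans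
    (card_hammingDist_le m)
  have := two_mul_ip_orient_add_hammingDist_le p.1 p.2
  simp only [mem_filter, mem_univ, true_and, not_le] at hp
  exact symIpApprox_apply φ (by omega)

end Construction

theorem exists_rank_le_two_pow_sub_one {K : Type} [Field K] {n : ℕ}
    (A : Matrix (Fin n → Bool) (Fin n → Bool) K) :
    ∃ B, B.rank ≤ 2 ^ n - 1 ∧ diffCount B A ≤ 2 ^ n := by
  let w : (Fin n → Bool) → K := fun x => if x = ⊥ then 0 else 1
  refine ⟨Matrix.diagonal w * A, ?_, ?_⟩
  · refine (Matrix.rank_mul_le_left _ _).trans_eq ?_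
    rw [Matrix.rank_diagonal]
    simp [w, Fintype.card_subtype_compl]
  · refine (diffCount_le_card ({⊥} ×ˢ univ) fun p hp => ?_).trans_eq (by simp)
    have hp1 : p.1 ≠ ⊥ := fun h => hp (mem_product.mpr ⟨mem_singleton.mpr h, mem_univ _⟩)
    simp [w, Matrix.diagonal_mul, hp1]

theorem sum_range_choose_le_exp_binEntropy {α : ℝ} (hα₀ : 0 < α) (hα : α ≤ 1 / 2) {n m : ℕ}
    (hm : (m : ℝ) ≤ α * n) : ∑ t ∈ range (m + 1), (n.choose t : ℝ) ≤ exp (n * binEntropy α) := by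
  have hmn : m ≤ n := by
    have : (m : ℝ) ≤ n := by nlinarith [(n.cast_nonneg : (0 : ℝ) ≤ n)]
    exact_mod_cast this
  have hterm (t : ℕ) (ht : t ≤ m) : exp (-(n * binEntropy α)) ≤ α ^ t * (1 - α) ^ (n - t) := by
    have h1α : 0 < 1 - α := by linarith
    rw [← exp_log (x := α ^ t * (1 - α) ^ (n - t)) (by positivity), exp_le_exp,
      log_mul (by positivity) (by positivity), log_pow, log_pow, Nat.cast_sub (ht.trans hmn),
      binEntropy, log_inv, log_inv]
    have hlog : log α ≤ log (1 - α) := log_le_log hα₀ (by linarith)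
    have ht' : (t : ℝ) ≤ α * n := (Nat.cast_le.mpr ht).trans hm
    nlinarith [mul_nonneg (sub_nonneg.mpr ht') (sub_nonneg.mpr hlog)]
  have hsum : (∑ t ∈ range (m + 1), (n.choose t : ℝ)) * exp (-(n * binEntropy α)) ≤ 1 :=
    calc _ ≤ ∑ t ∈ range (m + 1), α ^ t * (1 - α) ^ (n - t) * n.choose t := by
          rw [sum_mul]
          refine sum_le_sum fun t ht => ?_
          rw [mul_comm]
          exact mul_le_mul_of_nonneg_right (hterm t (mem_range_succ_iff.mp ht)) (by positivity)
      _ ≤ ∑ t ∈ range (n + 1), α ^ t * (1 - α) ^ (n - t) * n.choose t := by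
          refine sum_le_sum_of_subset_of_nonneg (range_subset_range.mpr (by omega)) ?_
          intro t _ _
          have : 0 ≤ 1 - α := by linarith
          positivity
      _ = 1 := by rw [← add_pow, add_sub_cancel, one_pow]
  rwa [exp_neg, ← div_eq_mul_inv, div_le_one (exp_pos _)] at hsum

theorem exists_pos_binEntropy_le {c : ℝ} (hc : 0 < c) :
    ∃ β, 0 < β ∧ β ≤ 1 / 2 ∧ binEntropy β ≤ c := by
  have hH : ∀ᶠ β in 𝓝 (0 : ℝ), binEntropy β < c :=
    binEntropy_continuous.continuousAt.eventually_lt continuousAt_const (by simpa using hc)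
  have hhalf : ∀ᶠ β in 𝓝 (0 : ℝ), β < 1 / 2 := eventually_lt_nhds (by norm_num)
  obtain ⟨β, ⟨hβH, hβhalf⟩, hβ⟩ := (((hH.and hhalf).filter_mono nhdsWithin_le_nhds).and
    (eventually_mem_nhdsWithin (s := Set.Ioi 0))).exists
  exact ⟨β, hβ, hβhalf.le, hβH.le⟩

theorem eventually_add_one_sq_le_pow {r : ℝ} (hr : 1 < r) :
    ∀ᶠ n : ℕ in atTop, ((n : ℝ) + 1) ^ 2 ≤ r ^ n := by
  have hlim := (tendsto_pow_const_div_const_pow_of_one_lt 2 hr).comp (tendsto_add_atTop_nat 1)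
  filter_upwards [hlim.eventually (gt_mem_nhds (inv_pos.mpr (zero_lt_one.trans hr)))] with n hn
  simp only [Function.comp_apply, Nat.cast_add, Nat.cast_one] at hn
  rw [div_lt_iff₀ (by positivity), pow_succ r n, mul_comm (r ^ n), ← mul_assoc,
    inv_mul_cancel₀ (by positivity), one_mul] at hn
  exact hn.le

theorem exists_eventually_add_one_sq_mul_exp_le {h : ℝ} (h₀ : 0 ≤ h) (hlt : h < log 2) :
    ∃ δ : ℝ, 0 < δ ∧ δ < 1 ∧ ∀ᶠ n : ℕ in atTop, ((n : ℝ) + 1) ^ 2 * exp (n * h) ≤ 2 ^ (δ * n) := by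
  have hlog : 0 < log 2 := log_pos one_lt_two
  refine ⟨(h / log 2 + 1) / 2, by positivity, by
    rw [div_lt_one two_pos, ← lt_sub_iff_add_lt, div_lt_iff₀ hlog]; linarith, ?_⟩
  filter_upwards [eventually_add_one_sq_le_pow (one_lt_exp_iff.mpr (half_pos (sub_pos.mpr hlt)))]
    with n hn
  have h2 : (2 : ℝ) ^ ((h / log 2 + 1) / 2 * n) = exp ((log 2 - h) / 2) ^ n * exp (n * h) := by
    rw [rpow_def_of_pos two_pos, ← exp_nat_mul, ← exp_add]
    congr 1
    field_simp
    ring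
  rw [h2]
  exact mul_le_mul_of_nonneg_right hn (exp_pos _).le

theorem eventually_sub_two_mul_floor_le {β : ℝ} (hβ₀ : 0 < β) (hβ : β ≤ 2) :
    ∀ᶠ n : ℕ in atTop, ((n - 2 * ⌊(1 / 2 - β / 4) * n⌋₊ : ℕ) : ℝ) ≤ β * n := by
  filter_upwards [eventually_ge_atTop ⌈4 / β⌉₊] with n hn
  have hαn : 0 ≤ (1 / 2 - β / 4) * n := by have := n.cast_nonneg (α := ℝ); nlinarith
  have hfloor := Nat.floor_le hαn
  have hfloor' := Nat.lt_floor_add_one ((1 / 2 - β / 4) * n)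
  have hn' : 4 / β ≤ n := Nat.ceil_le.mp hn
  have hβn : 4 ≤ β * n := by rwa [div_le_iff₀ hβ₀, mul_comm] at hn'
  have h2d : 2 * ⌊(1 / 2 - β / 4) * n⌋₊ ≤ n := by
    have : (2 * ⌊(1 / 2 - β / 4) * n⌋₊ : ℝ) ≤ n := by nlinarith
    exact_mod_cast this
  rw [Nat.cast_sub h2d]
  push_cast
  nlinarith

theorem exists_lt_one_forall_of_eventually {P : ℕ → ℝ → Prop} (hP : ∀ n, Monotone (P n))
    {δ₀ : ℝ} (hδ₀ : δ₀ < 1) (hev : ∀ᶠ n in atTop, P n δ₀)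
    (hnear : ∀ n, ∀ᶠ δ in 𝓝[<] 1, P n δ) : ∃ δ, δ₀ ≤ δ ∧ δ < 1 ∧ ∀ n, P n δ := by
  obtain ⟨N, hN⟩ := eventually_atTop.mp hev
  obtain ⟨δ, hsmall, hδ₀δ, hδ⟩ :=
    (((range N).eventually_all.mpr fun n _ => hnear n).and (Ioo_mem_nhdsLT hδ₀)).exists
  refine ⟨δ, hδ₀δ.le, hδ, fun n => ?_⟩
  by_cases hn : n < N
  · exact hsmall n (mem_range.mpr hn)
  · exact hP n hδ₀δ.le (hN n (not_lt.mp hn))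

def SymIpApproximable (ε δ : ℝ) (n : ℕ) : Prop :=
  ∀ (K : Type) [Field K] (φ : ℕ → K), ∃ B : Matrix (Fin n → Bool) (Fin n → Bool) K,
    (B.rank : ℝ) ≤ 2 ^ (δ * n) ∧ (diffCount B (.of fun x y => φ (ip x y)) : ℝ) ≤ 2 ^ ((1 + ε) * n)

theorem SymIpApproximable.monotone (ε : ℝ) (n : ℕ) :
    Monotone fun δ => SymIpApproximable ε δ n := fun _ _ hδ h K _ φ =>
  (h K φ).imp fun _ hB => ⟨hB.1.trans (rpow_le_rpow_of_exponent_le one_le_two (by gcongr)), hB.2⟩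

theorem eventually_nhdsLT_symIpApproximable {ε : ℝ} (hε : 0 ≤ ε) (n : ℕ) :
    ∀ᶠ δ in 𝓝[<] 1, SymIpApproximable ε δ n := by
  have hlt : ((2 ^ n - 1 : ℕ) : ℝ) < 2 ^ ((1 : ℝ) * n) := by
    rw [one_mul, rpow_natCast]
    exact_mod_cast Nat.sub_lt (Nat.two_pow_pos n) one_pos
  have hcont : ContinuousAt (fun δ : ℝ => (2 : ℝ) ^ (δ * n)) 1 :=
    (continuousAt_const_rpow two_ne_zero).comp (continuousAt_id.mul continuousAt_const)
  filter_upwards [(continuousAt_const.eventually_lt hcont hlt).filter_mono nhdsWithin_le_nhds]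
    with δ hδ K _ φ
  obtain ⟨B, hrank, hdiff⟩ := exists_rank_le_two_pow_sub_one (.of fun x y => φ (ip x y))
  refine ⟨B, (Nat.cast_le.mpr hrank).trans hδ.le, (Nat.cast_le.mpr hdiff).trans ?_⟩
  rw [Nat.cast_pow, Nat.cast_ofNat, ← rpow_natCast]
  exact rpow_le_rpow_of_exponent_le one_le_two (by nlinarith [n.cast_nonneg (α := ℝ)])

theorem exists_eventually_symIpApproximable {ε : ℝ} (hε : 0 < ε) :
    ∃ δ, 0 < δ ∧ δ < 1 ∧ ∀ᶠ n in atTop, SymIpApproximable ε δ n := by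
  obtain ⟨β, hβ₀, hβ, hHβ⟩ := exists_pos_binEntropy_le (mul_pos hε (log_pos one_lt_two))
  set α := 1 / 2 - β / 4 with hα_def
  have hα₀ : 0 < α := by linarith
  have hα : α < 1 / 2 := by linarith
  obtain ⟨δ, hδ₀, hδ, hrank⟩ := exists_eventually_add_one_sq_mul_exp_le
    (binEntropy_nonneg hα₀.le (by linarith)) (binEntropy_lt_log_two.mpr (by norm_num; linarith))
  refine ⟨δ, hδ₀, hδ, ?_⟩
  filter_upwards [hrank, eventually_sub_two_mul_floor_le hβ₀ (by linarith)] with n hn hm K _ φ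
  set d := ⌊α * n⌋₊
  refine ⟨symIpApprox n d φ, ?_, ?_⟩
  · calc _ ≤ (((n + 1) ^ 2 * ∑ j ∈ range (d + 1), n.choose j : ℕ) : ℝ) :=
          Nat.cast_le.mpr (rank_symIpApprox_le d φ)
      _ ≤ ((n : ℝ) + 1) ^ 2 * exp (n * binEntropy α) := by
          push_cast
          gcongr
          exact sum_range_choose_le_exp_binEntropy hα₀ hα.le (Nat.floor_le (by positivity))
      _ ≤ _ := hn
  · calc _ ≤ ((2 ^ n * ∑ t ∈ range (n - 2 * d + 1), n.choose t : ℕ) : ℝ) :=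
          Nat.cast_le.mpr (diffCount_symIpApprox_le φ (by omega))
      _ ≤ 2 ^ (n : ℝ) * exp (n * (ε * log 2)) := by
          rw [rpow_natCast]
          push_cast
          gcongr
          exact (sum_range_choose_le_exp_binEntropy hβ₀ hβ hm).trans (by gcongr)
      _ = 2 ^ ((1 + ε) * n) := by
          rw [rpow_def_of_pos two_pos, rpow_def_of_pos two_pos, ← exp_add]
          ring_nf

theorem exists_forall_symIpApproximable {ε : ℝ} (hε : 0 < ε) :
    ∃ δ, 0 < δ ∧ δ < 1 ∧ ∀ n, SymIpApproximable ε δ n := by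
  obtain ⟨δ₀, hδ₀, hδ₀1, hev⟩ := exists_eventually_symIpApproximable hε
  obtain ⟨δ, hδ₀δ, hδ, hall⟩ := exists_lt_one_forall_of_eventually
    (SymIpApproximable.monotone ε) hδ₀1 hev (eventually_nhdsLT_symIpApproximable hε.le)
  exact ⟨δ, hδ₀.trans_le hδ₀δ, hδ, hall⟩

/-- Non-rigidity of truth table matrices of inner-product-type functions of
    symmetric functions (SYM of ANDs of paired variables). -/
theorem sym_ip_not_rigid :
    ∃ ε₀ : ℝ, 0 < ε₀ ∧
      ∃ δ : ℝ → ℝ,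
        (∀ ε : ℝ, 0 < ε → ε < ε₀ → 0 < δ ε ∧ δ ε < 1) ∧
        ∀ ε : ℝ, 0 < ε → ε < ε₀ →
          ∀ (K : Type) [Field K], ∀ n : ℕ, ∀ φ : ℕ → K,
            ∃ B : Matrix (Fin n → Bool) (Fin n → Bool) K,
              (B.rank : ℝ) ≤ 2 ^ (δ ε * n) ∧
              (diffCount B (Matrix.of fun x y => φ (ip x y)) : ℝ) ≤
                2 ^ ((1 + ε) * n) := by
  have (ε : ℝ) : ∃ δ, 0 < ε → 0 < δ ∧ δ < 1 ∧ ∀ n, SymIpApproximable ε δ n := by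
    by_cases hε : 0 < ε
    · exact (exists_forall_symIpApproximable hε).imp fun _ h _ => h
    · exact ⟨0, fun h => absurd h hε⟩
  choose δ hδ using this
  exact ⟨1, one_pos, δ, fun ε hε _ => ⟨(hδ ε hε).1, (hδ ε hε).2.1⟩,
    fun ε hε _ K _ n φ => (hδ ε hε).2.2 n K φ⟩
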